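/- The Gross–Knuth reduction strategy, which at each step contracts all redexes of the current term simultaneously (a complete development), is cofinal: for every term M and every reduction sequence M →* N, there exists k such that N β-reduces to gk^k(M), the k-th iterate of the Gross–Knuth strategy applied to M. -/

import Mathlib

/-- Untyped λ-terms with de Bruijn indices (so α-equivalence is equality). -/
inductive Lam : Type
  | var : ℕ → Lam
  | app : Lam → Lam → Lam
  | lam : Lam → Lam
deriving DecidableEq, Repr

namespace Lam

/-- Lift (shift) free variables ≥ `d` by one. -/
def lift (d : ℕ) : Lam → Lam
  | var n => if n < d then var n else var (n + 1)
  | app s t => app (lift d s) (lift d t)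
  | lam t => lam (lift (d + 1) t)

/-- Substitute `u` for the variable with index `d`. -/
def subst (d : ℕ) (u : Lam) : Lam → Lam
  | var n => if n = d then u else if n < d then var n else var (n - 1)
  | app s t => app (subst d u s) (subst d u t)
  | lam t => lam (subst (d + 1) (lift 0 u) t)

/-- One-step β-reduction. -/
inductive Beta : Lam → Lam → Prop
  | beta (t u : Lam) : Beta (app (lam t) u) (subst 0 u t)
  | appL {s s' : Lam} (t : Lam) : Beta s s' → Beta (app s t) (app s' t)
  | appR (s : Lam) {t t' : Lam} : Beta t t' → Beta (app s t) (app s t')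
  | abs {t t' : Lam} : Beta t t' → Beta (lam t) (lam t')

/-- One-step η-reduction. -/
inductive Eta : Lam → Lam → Prop
  | eta (t : Lam) : Eta (lam (app (lift 0 t) (var 0))) t
  | appL {s s' : Lam} (t : Lam) : Eta s s' → Eta (app s t) (app s' t)
  | appR (s : Lam) {t t' : Lam} : Eta t t' → Eta (app s t) (app s t')
  | abs {t t' : Lam} : Eta t t' → Eta (lam t) (lam t')

/-- One-step βη-reduction. -/
def BetaEta (s t : Lam) : Prop := Beta s t ∨ Eta s t

/-- Multi-step β-reduction. -/
def BetaStar : Lam → Lam → Prop := Relation.ReflTransGen Beta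

/-- Multi-step βη-reduction. -/
def BetaEtaStar : Lam → Lam → Prop := Relation.ReflTransGen BetaEta

/-- β-conversion. -/
def BetaConv : Lam → Lam → Prop := Relation.EqvGen Beta

/-- βη-conversion. -/
def BetaEtaConv : Lam → Lam → Prop := Relation.EqvGen BetaEta

/-- All free variables have index < `d`. -/
def ClosedUnder : ℕ → Lam → Prop
  | d, var n => n < d
  | d, app s t => ClosedUnder d s ∧ ClosedUnder d t
  | d, lam t => ClosedUnder (d + 1) t

/-- A term is closed if it has no free variables. -/
def Closed (t : Lam) : Prop := ClosedUnder 0 t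

/-- β-normal form. -/
def BetaNF (t : Lam) : Prop := ∀ u, ¬ Beta t u

/-- βη-normal form. -/
def BetaEtaNF (t : Lam) : Prop := ∀ u, ¬ BetaEta t u

end Lam

open Lam

/-- The Gross–Knuth step: contract all β-redexes of the term simultaneously
(a complete development). -/
def gk : Lam → Lam
  | Lam.var n => Lam.var n
  | Lam.lam t => Lam.lam (gk t)
  | Lam.app (Lam.lam t) u => Lam.subst 0 (gk u) (gk t)
  | Lam.app (Lam.var n) t => Lam.app (Lam.var n) (gk t)
  | Lam.app (Lam.app s₁ s₂) t => Lam.app (gk (Lam.app s₁ s₂)) (gk t)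

/-! Takahashi's triangle property for parallel reduction `⇒` (`Par`):
if `M ⇒ N` then `N ⇒ gk M`. Applied twice it makes `gk` monotone for `⇒`, hence for `→*`;
and a one-step reduct `M'` of `M` satisfies `M' →* gk M`.
Splitting `M →* N` as `M → M' →* N`, induction gives
`N →* gk^[k] M' →* gk^[k] (gk M) = gk^[k+1] M`. -/

namespace Lam

theorem lift_lift {e d : ℕ} (h : e ≤ d) (t : Lam) :
    lift (d + 1) (lift e t) = lift e (lift d t) := by
  induction t generalizing e d with
  | var n =>
    simp only [lift]
    split_ifs <;> simp only [lift] <;> split_ifs <;> first | rfl | omega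
  | app s t ihs iht => simp only [lift, ihs h, iht h]
  | lam t ih => simp only [lift, ih (Nat.succ_le_succ h)]

theorem lift_subst_of_le {e d : ℕ} (h : e ≤ d) (u t : Lam) :
    lift d (subst e u t) = subst e (lift d u) (lift (d + 1) t) := by
  induction t generalizing e d u with
  | var n =>
    simp only [lift, subst]
    split_ifs <;> simp only [lift, subst] <;> split_ifs <;> first | rfl | omega | (congr 1; omega)
  | app s t ihs iht => simp only [lift, subst, ihs h, iht h]
  | lam t ih => simp only [lift, subst, ih (Nat.succ_le_succ h), lift_lift (Nat.zero_le d)]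

theorem lift_subst_of_ge {e d : ℕ} (h : d ≤ e) (u t : Lam) :
    lift d (subst e u t) = subst (e + 1) (lift d u) (lift d t) := by
  induction t generalizing e d u with
  | var n =>
    simp only [lift, subst]
    split_ifs <;> simp only [lift, subst] <;> split_ifs <;> first | rfl | omega | (congr 1; omega)
  | app s t ihs iht => simp only [lift, subst, ihs h, iht h]
  | lam t ih => simp only [lift, subst, ih (Nat.succ_le_succ h), lift_lift (Nat.zero_le d)]

@[simp]
theorem subst_lift (d : ℕ) (u t : Lam) : subst d u (lift d t) = t := by
  induction t generalizing d u with
  | var n =>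
    simp only [lift]
    split_ifs <;> simp only [subst] <;> split_ifs <;> first | rfl | omega
  | app s t ihs iht => simp only [lift, subst, ihs, iht]
  | lam t ih => simp only [lift, subst, ih]

theorem subst_subst {e d : ℕ} (h : e ≤ d) (u v t : Lam) :
    subst d u (subst e v t) = subst e (subst d u v) (subst (d + 1) (lift e u) t) := by
  induction t generalizing e d u v with
  | var n =>
    simp only [subst]
    split_ifs <;> (try simp only [subst]) <;> (try split_ifs) <;>
      first | rfl | omega | rw [subst_lift]
  | app s t ihs iht => simp only [subst, ihs h, iht h]
  | lam t ih =>
    simp only [subst]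
    rw [ih (Nat.succ_le_succ h), lift_subst_of_ge (Nat.zero_le d), lift_lift (Nat.zero_le e)]

inductive Par : Lam → Lam → Prop
  | var (n : ℕ) : Par (var n) (var n)
  | app {s s' t t' : Lam} : Par s s' → Par t t' → Par (app s t) (app s' t')
  | abs {t t' : Lam} : Par t t' → Par (lam t) (lam t')
  | beta {t t' u u' : Lam} : Par t t' → Par u u' → Par (app (lam t) u) (subst 0 u' t')

@[refl]
theorem Par.refl : ∀ t : Lam, Par t t
  | .var n => .var n
  | .app s t => .app (Par.refl s) (Par.refl t)
  | .lam t => .abs (Par.refl t)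

theorem Beta.par {s t : Lam} (h : Beta s t) : Par s t := by
  induction h with
  | beta t u => exact .beta (.refl t) (.refl u)
  | appL t _ ih => exact .app ih (.refl t)
  | appR s _ ih => exact .app (.refl s) ih
  | abs _ ih => exact .abs ih

theorem BetaStar.appL {s s' : Lam} (t : Lam) (h : BetaStar s s') :
    BetaStar (app s t) (app s' t) :=
  h.lift (app · t) fun _ _ => Beta.appL t

theorem BetaStar.appR (s : Lam) {t t' : Lam} (h : BetaStar t t') :
    BetaStar (app s t) (app s t') :=
  h.lift (app s) fun _ _ => Beta.appR s

theorem BetaStar.abs {t t' : Lam} (h : BetaStar t t') : BetaStar (lam t) (lam t') :=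
  h.lift lam fun _ _ => Beta.abs

theorem Par.betaStar {s t : Lam} (h : Par s t) : BetaStar s t := by
  induction h with
  | var n => exact .refl
  | app _ _ ihs iht => exact (ihs.appL _).trans (iht.appR _)
  | abs _ ih => exact ih.abs
  | @beta t t' u u' _ _ iht ihu =>
    exact ((iht.abs.appL u).trans (ihu.appR _)).tail (.beta t' u')

theorem Par.lift {s t : Lam} (d : ℕ) (h : Par s t) : Par (lift d s) (lift d t) := by
  induction h generalizing d with
  | var n => exact .refl _
  | app _ _ ihs iht => exact .app (ihs d) (iht d)
  | abs _ ih => exact .abs (ih (d + 1))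
  | beta _ _ iht ihu =>
    rw [Lam.lift, Lam.lift, lift_subst_of_le (Nat.zero_le d)]
    exact .beta (iht (d + 1)) (ihu d)

theorem Par.subst {s s' u u' : Lam} (d : ℕ) (hs : Par s s') (hu : Par u u') :
    Par (subst d u s) (subst d u' s') := by
  induction hs generalizing d u u' with
  | var n => simp only [Lam.subst]; split_ifs <;> first | exact hu | exact .refl _
  | app _ _ ihs iht => exact .app (ihs d hu) (iht d hu)
  | abs _ ih => exact .abs (ih (d + 1) (hu.lift 0))
  | beta _ _ iht ihu =>
    rw [Lam.subst, Lam.subst, subst_subst (Nat.zero_le d)]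
    exact .beta (iht (d + 1) (hu.lift 0)) (ihu d hu)

theorem Par.triangle {s t : Lam} (h : Par s t) : Par t (gk s) := by
  induction h with
  | var n => exact .var n
  | @app s _ _ _ hs _ ihs iht =>
    cases s with
    | var n => cases hs; exact .app (.var n) iht
    | app => exact .app ihs iht
    | lam =>
      cases hs with
      | abs => cases ihs with
        | abs hgk => exact .beta hgk iht
  | abs _ ih => exact .abs ih
  | beta _ _ iht ihu => exact .subst 0 iht ihu

theorem Par.map_gk {s t : Lam} (h : Par s t) : Par (gk s) (gk t) :=
  h.triangle.triangle

theorem Par.map_iterate_gk {s t : Lam} (h : Par s t) : ∀ k : ℕ, Par (gk^[k] s) (gk^[k] t)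
  | 0 => h
  | k + 1 => by
    rw [Function.iterate_succ_apply', Function.iterate_succ_apply']
    exact (h.map_iterate_gk k).map_gk

theorem Beta.betaStar_gk {s t : Lam} (h : Beta s t) : BetaStar t (gk s) :=
  h.par.triangle.betaStar

theorem BetaStar.map_iterate_gk {s t : Lam} (h : BetaStar s t) (k : ℕ) :
    BetaStar (gk^[k] s) (gk^[k] t) :=
  h.lift' gk^[k] fun _ _ hst => (hst.par.map_iterate_gk k).betaStar

end Lam

/-- The Gross–Knuth strategy is cofinal: every β-reduct `N` of `M` β-reduces
to some iterate `gk^[k] M` of the Gross–Knuth strategy applied to `M`. -/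
theorem grossKnuth_cofinal (M N : Lam) (h : BetaStar M N) :
    ∃ k : ℕ, BetaStar N (gk^[k] M) := by
  induction h using Relation.ReflTransGen.head_induction_on with
  | refl => exact ⟨0, .refl⟩
  | @head M M' hMM' _ ih =>
    obtain ⟨k, hk⟩ := ih
    refine ⟨k + 1, hk.trans ?_⟩
    rw [Function.iterate_succ_apply]
    exact hMM'.betaStar_gk.map_iterate_gk k
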